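/- arXiv:2112.02742 — 5 statements merged into one kernel-verified Lean document; each statement's English description precedes it below -/
import Mathlib

section
/- Let L : (0,∞) → (0,∞) be a positive monotone function that is slowly varying, i.e. L(tx)/L(t) → 1 as t → ∞ for every x > 0. Let a > 0, let (b_n) be a sequence tending to infinity, and for each n let ξ_n ∈ (a, b_n) be given by the mean value theorem for the integral ∫_a^{b_n} x^{r-1-α} L(x) dx = L(ξ_n) ∫_a^{b_n} x^{r-1-α} dx, where r ≥ 1 and 0 < α < 1. Then L(ξ_n)/L(b_n) → 1 as n → ∞. -/
/-!
Substituting `x = t u` turns `(∫_a^t x^p L x dx) / (t^(p+1) L t)` into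
`∫_{a/t}^1 u^p L(t u) / L t du`, whose integrand tends to `u^p` by slow variation. For antitone `L`,
iterating `L s ≤ 2^η L (2 s)` gives a Potter bound `L x ≤ M (t/x)^η L t` on `[a, t]`, which
dominates the integrand by `M u^(p-η)`, integrable once `η < p + 1`; dominated convergence then
gives Karamata's limit `1/(p+1)`. As `L (ξ n)` is the quotient of `∫ x^p L x` by `∫ x^p`, applying
this limit to `L` and to `L = 1` gives `L (ξ n) / L (b n) → 1`.
-/

open Filter MeasureTheory Real Set Topology

def SlowlyVarying (L : ℝ → ℝ) : Prop :=
  ∀ x > 0, Tendsto (fun t => L (t * x) / L t) atTop (𝓝 1)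

theorem Antitone.potter_bound {L : ℝ → ℝ} (hL : Antitone L) {η T : ℝ} (hη : 0 ≤ η)
    (hT : 0 < T) (hL0 : ∀ t ≥ T, 0 ≤ L t) (hdouble : ∀ t ≥ T, L t ≤ 2 ^ η * L (t * 2))
    {s t : ℝ} (hs : T ≤ s) (hst : s ≤ t) : L s ≤ (2 * t / s) ^ η * L t := by
  have near : ∀ s t, T ≤ s → s ≤ t → t ≤ s * 2 → L s ≤ (2 * t / s) ^ η * L t := by
    intro s t hs hst ht
    have hs0 : 0 < s := hT.trans_le hs
    calc L s ≤ 2 ^ η * L (s * 2) := hdouble s hs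
      _ ≤ 2 ^ η * L t := by gcongr; exact hL ht
      _ ≤ (2 * t / s) ^ η * L t := by
        gcongr
        · exact hL0 t (hs.trans hst)
        · rw [le_div_iff₀ hs0]; linarith
  have far :
      ∀ k : ℕ, ∀ s t, T ≤ s → s ≤ t → t ≤ s * 2 ^ k → L s ≤ (2 * t / s) ^ η * L t := by
    intro k
    induction k with
    | zero => intro s t hs hst ht; exact near s t hs hst (by linarith)
    | succ k ih =>
      intro s t hs hst ht
      rcases le_or_gt t (s * 2) with h | h
      · exact near s t hs hst h
      have hs0 : 0 < s := hT.trans_le hs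
      have ht0 : 0 < t := hs0.trans_le hst
      calc L s ≤ 2 ^ η * L (s * 2) := hdouble s hs
        _ ≤ 2 ^ η * ((2 * t / (s * 2)) ^ η * L t) := by
          gcongr
          exact ih (s * 2) t (by linarith) h.le (by rw [pow_succ] at ht; linarith)
        _ = (2 * t / s) ^ η * L t := by
          rw [← mul_assoc, ← mul_rpow zero_le_two (by positivity)]
          congr 2
          field_simp
  obtain ⟨k, hk⟩ := pow_unbounded_of_one_lt (t / s) one_lt_two
  have hs0 : 0 < s := hT.trans_le hs
  exact far k s t hs hst (by rw [div_lt_iff₀ hs0] at hk; linarith)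

theorem integral_rpow_mul_eq_rpow_mul_integral_indicator (f : ℝ → ℝ) {a t p : ℝ} (ha : 0 < a)
    (hat : a ≤ t) :
    ∫ x in a..t, x ^ p * f x
      = t ^ (p + 1) *
        ∫ u in (0 : ℝ)..1, (Ioc (a / t) 1).indicator (fun u => u ^ p * f (t * u)) u := by
  have ht : 0 < t := ha.trans_le hat
  have hat' : a / t ≤ 1 := (div_le_one ht).2 hat
  have hsub := intervalIntegral.integral_comp_mul_left (fun x => x ^ p * f x) ht.ne'
    (a := a / t) (b := 1)
  rw [mul_div_cancel₀ _ ht.ne', mul_one, smul_eq_mul] at hsub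
  have hscale : ∫ u in a / t..1, (t * u) ^ p * f (t * u)
      = t ^ p * ∫ u in a / t..1, u ^ p * f (t * u) := by
    rw [← intervalIntegral.integral_const_mul]
    refine intervalIntegral.integral_congr fun u hu => ?_
    have hu0 : 0 < u := (div_pos ha ht).trans_le (uIcc_of_le hat' ▸ hu).1
    rw [mul_rpow ht.le hu0.le, mul_assoc]
  rw [intervalIntegral.integral_of_le zero_le_one, setIntegral_indicator measurableSet_Ioc,
    Ioc_inter_Ioc, sup_eq_right.2 (div_pos ha ht).le, inf_idem,
    ← intervalIntegral.integral_of_le hat', rpow_add_one ht.ne', mul_comm (t ^ p) t, mul_assoc,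
    ← hscale, hsub]
  field_simp

theorem norm_indicator_rpow_mul_div_le {L : ℝ → ℝ} (hLpos : ∀ x > 0, 0 < L x)
    {a p η M t u : ℝ} (hM0 : 0 ≤ M) (ht0 : 0 < t) (hu : u ∈ Ioc 0 1)
    (hbound : ∀ x ∈ Icc a t, L x ≤ M * (t / x) ^ η * L t) :
    ‖(Ioc (a / t) 1).indicator (fun u => u ^ p * (L (t * u) / L t)) u‖ ≤ M * u ^ (p - η) := by
  have hu0 := hu.1
  by_cases hmem : u ∈ Ioc (a / t) 1
  · have hLt : 0 < L t := hLpos t ht0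
    have hau : a < t * u := by linarith [(div_lt_iff₀ ht0).1 hmem.1, mul_comm t u]
    have hLtu := hbound (t * u) ⟨hau.le, mul_le_of_le_one_right ht0.le hu.2⟩
    rw [div_mul_cancel_left₀ ht0.ne', inv_rpow hu0.le, ← rpow_neg hu0.le] at hLtu
    have hratio : L (t * u) / L t ≤ M * u ^ (-η) := by rwa [div_le_iff₀ hLt]
    rw [indicator_of_mem hmem, norm_of_nonneg (mul_nonneg (rpow_nonneg hu0.le _)
      (div_nonneg (hLpos _ (mul_pos ht0 hu0)).le hLt.le))]
    calc u ^ p * (L (t * u) / L t) ≤ u ^ p * (M * u ^ (-η)) := by gcongr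
      _ = M * u ^ (p - η) := by rw [sub_eq_add_neg, rpow_add hu0]; ring
  · rw [indicator_of_notMem hmem, norm_zero]
    exact mul_nonneg hM0 (rpow_nonneg hu0.le _)

namespace SlowlyVarying

variable {L : ℝ → ℝ}

theorem eventually_le_two_rpow_mul (hL : SlowlyVarying L) (hLpos : ∀ x > 0, 0 < L x)
    {η : ℝ} (hη : 0 < η) : ∀ᶠ t in atTop, L t ≤ 2 ^ η * L (t * 2) := by
  have hlt : (2 : ℝ) ^ (-η) < 1 := rpow_lt_one_of_one_lt_of_neg one_lt_two (neg_lt_zero.2 hη)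
  filter_upwards [(hL 2 two_pos).eventually (lt_mem_nhds hlt), eventually_gt_atTop 0]
    with t ht ht0
  rw [lt_div_iff₀ (hLpos t ht0), rpow_neg zero_le_two] at ht
  calc L t = 2 ^ η * ((2 ^ η)⁻¹ * L t) := by field_simp
    _ ≤ 2 ^ η * L (t * 2) := by gcongr

theorem exists_le_mul_div_rpow_mul (hL : SlowlyVarying L) (hLpos : ∀ x > 0, 0 < L x)
    (hLmono : Monotone L ∨ Antitone L) {a η : ℝ} (ha : 0 < a) (hη : 0 < η) :
    ∃ M, 0 ≤ M ∧ ∀ᶠ t in atTop, ∀ x ∈ Icc a t, L x ≤ M * (t / x) ^ η * L t := by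
  rcases hLmono with hM | hA
  · refine ⟨1, zero_le_one, Eventually.of_forall fun t x hx => ?_⟩
    have hx0 : 0 < x := ha.trans_le hx.1
    have hLt : 0 < L t := hLpos t (hx0.trans_le hx.2)
    calc L x ≤ L t := hM hx.2
      _ ≤ 1 * (t / x) ^ η * L t := by
        rw [one_mul]
        exact le_mul_of_one_le_left hLt.le (one_le_rpow ((one_le_div hx0).2 hx.2) hη.le)
  obtain ⟨T, hT⟩ := ((hL.eventually_le_two_rpow_mul hLpos hη).and
    (eventually_ge_atTop a)).exists_forall_of_atTop
  have haT : a ≤ T := (hT T le_rfl).2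
  have hT0 : 0 < T := ha.trans_le haT
  set M := L a / L T
  have hM : 1 ≤ M := (one_le_div (hLpos T hT0)).2 (hA haT)
  refine ⟨M * 2 ^ η, mul_nonneg (zero_le_one.trans hM) (by positivity), ?_⟩
  filter_upwards [eventually_ge_atTop T] with t ht x hx
  have hx0 : 0 < x := ha.trans_le hx.1
  have ht0 : 0 < t := hx0.trans_le hx.2
  have potter : ∀ s ≥ T, s ≤ t → L s ≤ (2 * t / s) ^ η * L t := fun s hs hst =>
    hA.potter_bound hη.le hT0 (fun u hu => (hLpos u (hT0.trans_le hu)).le)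
      (fun u hu => (hT u hu).1) hs hst
  have key : L x ≤ M * (2 * t / x) ^ η * L t := by
    rcases le_total T x with hTx | hxT
    · calc L x ≤ (2 * t / x) ^ η * L t := potter x hTx hx.2
        _ ≤ M * (2 * t / x) ^ η * L t := by
          rw [mul_assoc]
          exact le_mul_of_one_le_left (mul_nonneg (by positivity) (hLpos t ht0).le) hM
    · calc L x ≤ L a := hA hx.1
        _ = M * L T := (div_mul_cancel₀ _ (hLpos T hT0).ne').symm
        _ ≤ M * ((2 * t / T) ^ η * L t) := by gcongr; exact potter T le_rfl ht
        _ ≤ M * (2 * t / x) ^ η * L t := by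
          rw [← mul_assoc]; gcongr
          exact (hLpos t ht0).le
  rwa [mul_div_assoc, mul_rpow zero_le_two (div_pos ht0 hx0).le, ← mul_assoc] at key

theorem tendsto_indicator_rpow_mul_div (hL : SlowlyVarying L) {a p u : ℝ} (ha : 0 < a)
    (hu : u ∈ Ioc 0 1) :
    Tendsto (fun t => (Ioc (a / t) 1).indicator (fun u => u ^ p * (L (t * u) / L t)) u) atTop
      (𝓝 (u ^ p)) := by
  have hlim := (hL u hu.1).const_mul (u ^ p)
  rw [mul_one] at hlim
  refine hlim.congr' ?_
  filter_upwards [eventually_gt_atTop (a / u)] with t ht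
  have ht0 : 0 < t := (div_pos ha hu.1).trans ht
  have hau : a < t * u := by rwa [div_lt_iff₀ hu.1] at ht
  have hmem : u ∈ Ioc (a / t) 1 := ⟨(div_lt_iff₀ ht0).2 (by linarith [mul_comm t u]), hu.2⟩
  rw [indicator_of_mem hmem]

theorem tendsto_integral_rpow_mul_div (hL : SlowlyVarying L) (hLpos : ∀ x > 0, 0 < L x)
    (hLmono : Monotone L ∨ Antitone L) {a p : ℝ} (ha : 0 < a) (hp : -1 < p) :
    Tendsto (fun t => (∫ x in a..t, x ^ p * L x) / (t ^ (p + 1) * L t)) atTop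
      (𝓝 (1 / (p + 1))) := by
  obtain ⟨M, hM0, hM⟩ := hL.exists_le_mul_div_rpow_mul hLpos hLmono ha (η := (p + 1) / 2)
    (div_pos (by linarith) two_pos)
  have hLmeas : Measurable L := hLmono.elim Monotone.measurable Antitone.measurable
  set F : ℝ → ℝ → ℝ := fun t => (Ioc (a / t) 1).indicator (fun u => u ^ p * (L (t * u) / L t))
  have hF :
      Tendsto (fun t => ∫ u in (0 : ℝ)..1, F t u) atTop (𝓝 (∫ u in (0 : ℝ)..1, u ^ p)) := by
    refine intervalIntegral.tendsto_integral_filter_of_dominated_convergence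
      (fun u => M * u ^ (p - (p + 1) / 2)) (Eventually.of_forall fun t => ?_) ?_ ?_ ?_
    · exact (((measurable_id.pow_const p).mul
        ((hLmeas.comp (measurable_const_mul t)).div_const _)).indicator
          measurableSet_Ioc).aestronglyMeasurable
    · filter_upwards [hM, eventually_gt_atTop 0] with t ht ht0
      refine Eventually.of_forall fun u hu => ?_
      rw [uIoc_of_le zero_le_one] at hu
      exact norm_indicator_rpow_mul_div_le hLpos hM0 ht0 hu ht
    · exact (intervalIntegral.intervalIntegrable_rpow' (by linarith)).const_mul M
    · refine Eventually.of_forall fun u hu => ?_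
      rw [uIoc_of_le zero_le_one] at hu
      exact hL.tendsto_indicator_rpow_mul_div ha hu
  rw [integral_rpow (Or.inl hp), one_rpow, zero_rpow (by linarith), sub_zero] at hF
  refine hF.congr' ?_
  filter_upwards [eventually_ge_atTop a] with t hat
  have ht0 : 0 < t := ha.trans_le hat
  have hsub :=
    integral_rpow_mul_eq_rpow_mul_integral_indicator (fun x => L x / L t) (p := p) ha hat
  have hdiv : ∫ x in a..t, x ^ p * (L x / L t) = (∫ x in a..t, x ^ p * L x) / L t := by
    simp_rw [← mul_div_assoc, intervalIntegral.integral_div]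
  rw [div_mul_eq_div_div_swap, ← hdiv, hsub, mul_div_cancel_left₀ _ (rpow_pos_of_pos ht0 _).ne']

end SlowlyVarying

theorem slowly_varying_mvt_ratio_general (L : ℝ → ℝ)
    (hLpos : ∀ x > 0, 0 < L x)
    (hLmono : Monotone L ∨ Antitone L)
    (hLsv : ∀ x > 0, Tendsto (fun t => L (t * x) / L t) atTop (nhds 1))
    (a : ℝ) (ha : 0 < a) (b : ℕ → ℝ) (hb : Tendsto b atTop atTop)
    (r α : ℝ) (hr : 1 ≤ r) (hα1 : α < 1)
    (ξ : ℕ → ℝ)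
    (hmv : ∀ n, (∫ x in a..(b n), x ^ (r - 1 - α) * L x)
        = L (ξ n) * ∫ x in a..(b n), x ^ (r - 1 - α)) :
    Tendsto (fun n => L (ξ n) / L (b n)) atTop (nhds 1) := by
  have hp : -1 < r - 1 - α := by linarith
  have hI := (SlowlyVarying.tendsto_integral_rpow_mul_div hLsv hLpos hLmono ha hp).comp hb
  have hJ := (SlowlyVarying.tendsto_integral_rpow_mul_div (L := fun _ => 1)
    (fun _ _ => by simp) (fun _ _ => one_pos) (Or.inl monotone_const) ha hp).comp hb
  have hq : 1 / (r - 1 - α + 1) ≠ 0 := (one_div_pos.2 (by linarith)).ne'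
  have hratio := hI.div hJ hq
  rw [div_self hq] at hratio
  refine hratio.congr' ?_
  filter_upwards [hb.eventually (eventually_gt_atTop a)] with n hn
  have hb0 : 0 < b n := ha.trans hn
  have hJpos : 0 < ∫ x in a..b n, x ^ (r - 1 - α) := by
    rw [integral_rpow (Or.inl hp)]
    exact div_pos (sub_pos.2 (rpow_lt_rpow ha.le hn (by linarith))) (by linarith)
  have hLb := hLpos (b n) hb0
  have hbq := rpow_pos_of_pos hb0 (r - 1 - α + 1)
  simp only [Pi.div_apply, Function.comp_apply, hmv n, mul_one]
  field_simp

/-- mean-value-theorem point for ∫ x^{r-1-α} L(x) dx satisfies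
`L(ξ_n)/L(b_n) → 1` when `L` is positive, monotone and slowly varying. -/
theorem slowly_varying_mvt_ratio (L : ℝ → ℝ)
    (hLpos : ∀ x > 0, 0 < L x)
    (hLmono : Monotone L ∨ Antitone L)
    (hLsv : ∀ x > 0, Tendsto (fun t => L (t * x) / L t) atTop (nhds 1))
    (a : ℝ) (ha : 0 < a) (b : ℕ → ℝ) (hb : Tendsto b atTop atTop)
    (r α : ℝ) (hr : 1 ≤ r) (hα0 : 0 < α) (hα1 : α < 1)
    (ξ : ℕ → ℝ) (hξ : ∀ n, a < ξ n ∧ ξ n < b n)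
    (hmv : ∀ n, (∫ x in a..(b n), x ^ (r - 1 - α) * L x)
        = L (ξ n) * ∫ x in a..(b n), x ^ (r - 1 - α)) :
    Tendsto (fun n => L (ξ n) / L (b n)) atTop (nhds 1) :=
  slowly_varying_mvt_ratio_general L hLpos hLmono hLsv a ha b hb r α hr hα1 ξ hmv
end

section
/- Let X have density f(x) = c·cos(x^{-α})/(x^{1+α}(sin(x^{-α})+1)) for x ≥ 1 (with c > 0 the normalizing constant) and f(x) = 0 otherwise, where 0 < α < 1. Then the tail satisfies 1 - F(b) = (c/α)·log(sin(b^{-α}) + 1) = (1 + o(1))·(c/α)·b^{-α} as b → ∞. -/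
/-!
The density has the explicit antiderivative `-(c/α) log (sin (x^{-α}) + 1)`, and the choice of `c`
makes the total mass `1`; this gives the tail formula. Since `log (sin t + 1) / t → 1` as
`t → 0` (the derivative of `log (sin t + 1)` at `0` is `1`) and `b^{-α} → 0⁺`, the asymptotics follow.
-/

open Filter Real Topology

lemma sin_rpow_neg_pos {α x : ℝ} (hα : 0 ≤ α) (hx : 1 ≤ x) : 0 < sin (x ^ (-α)) :=
  sin_pos_of_pos_of_lt_pi (rpow_pos_of_pos (by linarith) _)
    ((rpow_le_one_of_one_le_of_nonpos hx (neg_nonpos.mpr hα)).trans_lt (by linarith [pi_gt_three]))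

lemma hasDerivAt_log_sin_rpow_neg_add_one {α x : ℝ} (hx : 0 < x)
    (hs : sin (x ^ (-α)) + 1 ≠ 0) :
    HasDerivAt (fun y : ℝ => log (sin (y ^ (-α)) + 1))
      (-α * cos (x ^ (-α)) / (x ^ (1 + α) * (sin (x ^ (-α)) + 1))) x := by
  have hpow : HasDerivAt (fun y : ℝ => y ^ (-α)) (-α * x ^ (-α - 1)) x :=
    hasDerivAt_rpow_const (Or.inl hx.ne')
  refine (((hasDerivAt_sin _).comp x hpow).add_const 1).log hs |>.congr_deriv ?_
  rw [Function.comp_apply, show -α - 1 = -(1 + α) by ring, rpow_neg hx.le (1 + α)]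
  have : 0 < x ^ (1 + α) := rpow_pos_of_pos hx _
  field_simp

lemma integral_cos_rpow_neg_div {α : ℝ} (hα : 0 < α) {b : ℝ} (hb : 1 ≤ b) :
    ∫ x in (1:ℝ)..b, cos (x ^ (-α)) / (x ^ (1 + α) * (sin (x ^ (-α)) + 1)) =
      (log (sin 1 + 1) - log (sin (b ^ (-α)) + 1)) / α := by
  have hderiv : ∀ x ∈ Set.uIcc 1 b, HasDerivAt (fun y : ℝ => -log (sin (y ^ (-α)) + 1) / α)
      (cos (x ^ (-α)) / (x ^ (1 + α) * (sin (x ^ (-α)) + 1))) x := by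
    intro x hx
    rw [Set.uIcc_of_le hb] at hx
    have hs := sin_rpow_neg_pos hα.le hx.1
    refine ((hasDerivAt_log_sin_rpow_neg_add_one (α := α) (by linarith [hx.1])
      (by linarith)).neg.div_const α).congr_deriv ?_
    field_simp
  have hcont : ContinuousOn
      (fun x : ℝ => cos (x ^ (-α)) / (x ^ (1 + α) * (sin (x ^ (-α)) + 1))) (Set.uIcc 1 b) := by
    rw [Set.uIcc_of_le hb]
    have hne : ∀ x ∈ Set.Icc (1:ℝ) b, x ≠ 0 := fun x hx => by linarith [hx.1]
    refine ContinuousOn.div (by fun_prop (disch := assumption)) (by fun_prop (disch := assumption))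
      fun x hx => ?_
    have := sin_rpow_neg_pos hα.le hx.1
    have := rpow_pos_of_pos (by linarith [hx.1] : (0:ℝ) < x) (1 + α)
    positivity
  rw [intervalIntegral.integral_eq_sub_of_hasDerivAt hderiv hcont.intervalIntegrable]
  simp only [one_rpow]
  ring

lemma tendsto_log_sin_add_one_div_nhdsNE_zero :
    Tendsto (fun t : ℝ => log (sin t + 1) / t) (𝓝[≠] 0) (𝓝 1) := by
  have hd : HasDerivAt (fun t : ℝ => log (sin t + 1)) 1 0 := by
    simpa using ((hasDerivAt_sin 0).add_const 1).log (by simp)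
  refine hd.tendsto_slope_zero.congr' (Eventually.of_forall fun t => ?_)
  simp [div_eq_inv_mul]

lemma tendsto_rpow_neg_atTop_nhdsGT_zero {α : ℝ} (hα : 0 < α) :
    Tendsto (fun b : ℝ => b ^ (-α)) atTop (𝓝[>] 0) :=
  tendsto_nhdsWithin_iff.mpr ⟨tendsto_rpow_neg_atTop hα,
    (eventually_gt_atTop 0).mono fun _ hb => rpow_pos_of_pos hb _⟩

theorem tail_of_oscillating_density_general (α c : ℝ) (hα0 : 0 < α)
    (hc : c = α / Real.log (Real.sin 1 + 1))
    (F : ℝ → ℝ)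
    (hF : ∀ b, F b = ∫ x in (1:ℝ)..b,
        c * Real.cos (x ^ (-α)) / (x ^ (1 + α) * (Real.sin (x ^ (-α)) + 1))) :
    (∀ b ≥ (1:ℝ), 1 - F b = (c / α) * Real.log (Real.sin (b ^ (-α)) + 1))
    ∧ Tendsto (fun b : ℝ => (1 - F b) / ((c / α) * b ^ (-α))) atTop (nhds 1) := by
  have hlog : 0 < log (sin 1 + 1) :=
    log_pos (by linarith [sin_pos_of_pos_of_lt_pi one_pos (by linarith [pi_gt_three])])
  have hmass : c / α * log (sin 1 + 1) = 1 := by rw [hc]; field_simp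
  have htail : ∀ b ≥ (1:ℝ), 1 - F b = (c / α) * log (sin (b ^ (-α)) + 1) := by
    intro b hb
    simp_rw [hF b, mul_div_assoc, intervalIntegral.integral_const_mul,
      integral_cos_rpow_neg_div hα0 hb]
    linear_combination -hmass
  refine ⟨htail, (tendsto_log_sin_add_one_div_nhdsNE_zero.comp
    ((tendsto_rpow_neg_atTop_nhdsGT_zero hα0).mono_right (nhdsGT_le_nhdsNE 0))).congr' ?_⟩
  filter_upwards [eventually_ge_atTop 1] with b hb
  have : 0 < b ^ (-α) := rpow_pos_of_pos (by linarith) _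
  have : c ≠ 0 := by rw [hc]; positivity
  rw [htail b hb, Function.comp_apply]
  field_simp

/-- tail of the density
`f(x) = c cos(x^{-α}) / (x^{1+α}(sin(x^{-α})+1))` on `[1, ∞)`:
`1 - F(b) = (c/α) log(sin(b^{-α}) + 1) = (1 + o(1)) (c/α) b^{-α}` as `b → ∞`. -/
theorem tail_of_oscillating_density (α c : ℝ) (hα0 : 0 < α) (hα1 : α < 1)
    (hc : c = α / Real.log (Real.sin 1 + 1))
    (F : ℝ → ℝ)
    (hF : ∀ b, F b = ∫ x in (1:ℝ)..b,
        c * Real.cos (x ^ (-α)) / (x ^ (1 + α) * (Real.sin (x ^ (-α)) + 1))) :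
    (∀ b ≥ (1:ℝ), 1 - F b = (c / α) * Real.log (Real.sin (b ^ (-α)) + 1))
    ∧ Tendsto (fun b : ℝ => (1 - F b) / ((c / α) * b ^ (-α))) atTop (nhds 1) :=
  tail_of_oscillating_density_general α c hα0 hc F hF
end

section
/- For 0 < α < 2 and t ∈ ℝ, the power series identity α·∑_{k=1}^∞ (-1)^k t^{2k} / ((2k-α)·(2k)!) = -α·|t|^α·∫_0^{|t|} (1 - cos x)/x^{1+α} dx holds. -/
/-!
Expanding `1 - cos x = ∑_{k ≥ 0} (-1)^k x^{2k+2} / (2k+2)!` and dividing by `x^{1+α}` writes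
the integrand as a series of powers `x^{2k+1-α}`, all integrable on `(0, T]` because `α < 2`. The
series of their absolute integrals `T^{2k+2-α} / ((2k+2-α)(2k+2)!)` is dominated by an exponential
series, so the series may be integrated term by term; take `T = |t|` and multiply by `-|t|^α`.
-/

open MeasureTheory Real intervalIntegral
open scoped Nat

lemma two_mul_add_two_sub_pos {α : ℝ} (hα : α < 2) (k : ℕ) : 0 < 2 * (k : ℝ) + 2 - α := by
  linarith [k.cast_nonneg (α := ℝ)]

lemma hasSum_one_sub_cos (x : ℝ) :
    HasSum (fun k : ℕ ↦ (-1) ^ k * x ^ (2 * k + 2) / ((2 * k + 2)! : ℝ)) (1 - cos x) := by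
  have h := ((hasSum_nat_add_iff' 1).mpr (hasSum_cos x)).neg
  simp only [Finset.sum_range_one, pow_zero, mul_zero, Nat.factorial_zero, Nat.cast_one,
    div_one, mul_one, neg_sub] at h
  refine h.congr_fun fun k ↦ ?_
  rw [mul_add, pow_succ]
  ring

lemma hasSum_one_sub_cos_div_rpow {x : ℝ} (hx : 0 < x) (α : ℝ) :
    HasSum (fun k : ℕ ↦ (-1) ^ k / ((2 * k + 2)! : ℝ) * x ^ (2 * (k : ℝ) + 1 - α))
      ((1 - cos x) / x ^ (1 + α)) := by
  refine ((hasSum_one_sub_cos x).div_const (x ^ (1 + α))).congr_fun fun k ↦ ?_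
  rw [show 2 * (k : ℝ) + 1 - α = ((2 * k + 2 : ℕ) : ℝ) - (1 + α) by push_cast; ring,
    rpow_sub hx, rpow_natCast]
  ring

lemma integral_rpow_from_zero {r : ℝ} (hr : -1 < r) (T : ℝ) :
    ∫ x in (0 : ℝ)..T, x ^ r = T ^ (r + 1) / (r + 1) := by
  rw [integral_rpow (Or.inl hr), zero_rpow (by linarith), sub_zero]

lemma summable_rpow_div_mul_factorial {α T : ℝ} (hα : α < 2) (hT : 0 ≤ T) :
    Summable fun k : ℕ ↦
      T ^ (2 * (k : ℝ) + 2 - α) / ((2 * (k : ℝ) + 2 - α) * ((2 * k + 2)! : ℝ)) := by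
  have hexp : Summable fun k : ℕ ↦ T ^ (2 * k) / ((2 * k)! : ℝ) := by
    simpa [Function.comp_def] using
      (summable_pow_div_factorial T).comp_injective (mul_right_injective₀ two_ne_zero)
  refine .of_nonneg_of_le (fun k ↦ ?_) (fun k ↦ ?_) (hexp.mul_left (T ^ (2 - α) / (2 - α)))
  · have := two_mul_add_two_sub_pos hα k
    positivity
  · have hsplit : T ^ (2 * (k : ℝ) + 2 - α) = T ^ (2 - α) * T ^ (2 * k) := by
      rw [← rpow_natCast, ← rpow_add' hT (by linarith [k.cast_nonneg (α := ℝ)])]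
      push_cast
      ring_nf
    have hfac : ((2 * k)! : ℝ) ≤ (2 * k + 2)! := by exact_mod_cast Nat.factorial_le (by omega)
    rw [hsplit, div_mul_div_comm]
    gcongr
    · linarith
    · linarith [two_mul_add_two_sub_pos hα k]

theorem hasSum_integral_one_sub_cos_div_rpow {α T : ℝ} (hα : α < 2) (hT : 0 ≤ T) :
    HasSum (fun k : ℕ ↦ (-1) ^ k * T ^ (2 * (k : ℝ) + 2 - α)
        / ((2 * (k : ℝ) + 2 - α) * ((2 * k + 2)! : ℝ)))
      (∫ x in (0 : ℝ)..T, (1 - cos x) / x ^ (1 + α)) := by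
  set F : ℕ → ℝ → ℝ := fun k x ↦
    (-1) ^ k / ((2 * k + 2)! : ℝ) * x ^ (2 * (k : ℝ) + 1 - α)
  have hr (k : ℕ) : -1 < 2 * (k : ℝ) + 1 - α := by linarith [two_mul_add_two_sub_pos hα k]
  have hr_add_one (k : ℕ) : 2 * (k : ℝ) + 1 - α + 1 = 2 * (k : ℝ) + 2 - α := by ring
  have hF_int (k : ℕ) : IntegrableOn (F k) (Set.Ioc 0 T) :=
    (intervalIntegrable_rpow' (hr k)).1.const_mul _
  have hF_integral (k : ℕ) : ∫ x in Set.Ioc 0 T, F k x = (-1) ^ k *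
      T ^ (2 * (k : ℝ) + 2 - α) / ((2 * (k : ℝ) + 2 - α) * ((2 * k + 2)! : ℝ)) := by
    rw [MeasureTheory.integral_const_mul, ← integral_of_le hT, integral_rpow_from_zero (hr k),
      hr_add_one]
    field_simp
  have hF_norm (k : ℕ) : ∫ x in Set.Ioc 0 T, ‖F k x‖
      = T ^ (2 * (k : ℝ) + 2 - α) / ((2 * (k : ℝ) + 2 - α) * ((2 * k + 2)! : ℝ)) := by
    have hnorm : ∀ x ∈ Set.Ioc 0 T,
        ‖F k x‖ = 1 / ((2 * k + 2)! : ℝ) * x ^ (2 * (k : ℝ) + 1 - α) :=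
      fun x hx ↦ by simp [F, abs_of_nonneg (rpow_nonneg hx.1.le _)]
    rw [setIntegral_congr_fun measurableSet_Ioc hnorm, MeasureTheory.integral_const_mul,
      ← integral_of_le hT, integral_rpow_from_zero (hr k), hr_add_one]
    field_simp
  have h := hasSum_integral_of_summable_integral_norm hF_int
    (by simpa only [hF_norm] using summable_rpow_div_mul_factorial hα hT)
  simp only [hF_integral] at h
  rwa [integral_of_le hT, setIntegral_congr_fun measurableSet_Ioc
    fun x hx ↦ (hasSum_one_sub_cos_div_rpow hx.1 α).tsum_eq.symm]

theorem series_eq_integral_one_sub_cos_general (α t : ℝ) (hα2 : α < 2) :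
    α * ∑' k : ℕ, (-1 : ℝ) ^ (k + 1) * t ^ (2 * k + 2)
        / ((2 * (k : ℝ) + 2 - α) * (Nat.factorial (2 * k + 2) : ℝ))
      = -(α * |t| ^ α * ∫ x in (0:ℝ)..|t|, (1 - Real.cos x) / x ^ (1 + α)) := by
  have h := (hasSum_integral_one_sub_cos_div_rpow hα2 (abs_nonneg t)).mul_left (-|t| ^ α)
  have hpow (k : ℕ) : |t| ^ α * |t| ^ (2 * (k : ℝ) + 2 - α) = t ^ (2 * k + 2) := by
    rw [← rpow_add' (abs_nonneg t) (by linarith [k.cast_nonneg (α := ℝ)]),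
      show α + (2 * (k : ℝ) + 2 - α) = ((2 * k + 2 : ℕ) : ℝ) by push_cast; ring,
      rpow_natCast, Even.pow_abs ⟨k + 1, by ring⟩]
  have hterm (k : ℕ) : -|t| ^ α * ((-1) ^ k * |t| ^ (2 * (k : ℝ) + 2 - α)
        / ((2 * (k : ℝ) + 2 - α) * ((2 * k + 2)! : ℝ)))
      = (-1) ^ (k + 1) * t ^ (2 * k + 2) / ((2 * (k : ℝ) + 2 - α) * ((2 * k + 2)! : ℝ)) := by
    rw [← hpow, pow_succ]
    ring
  simp only [hterm] at h
  rw [h.tsum_eq]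
  ring

/-- for `0 < α < 2`,
`α ∑_{k≥1} (-1)^k t^{2k} / ((2k-α)(2k)!) = -α |t|^α ∫_0^{|t|} (1 - cos x)/x^{1+α} dx`.
(The sum over `k ≥ 1` is reindexed as a sum over `k : ℕ` via `k ↦ k + 1`.) -/
theorem series_eq_integral_one_sub_cos (α t : ℝ) (hα0 : 0 < α) (hα2 : α < 2) :
    α * ∑' k : ℕ, (-1 : ℝ) ^ (k + 1) * t ^ (2 * k + 2)
        / ((2 * (k : ℝ) + 2 - α) * (Nat.factorial (2 * k + 2) : ℝ))
      = -(α * |t| ^ α * ∫ x in (0:ℝ)..|t|, (1 - Real.cos x) / x ^ (1 + α)) :=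
  series_eq_integral_one_sub_cos_general α t hα2
end

section
/- For 0 < β < 1, the improper integral ∫_0^∞ (e^{ix} - 1)/x^{1+β} dx converges (as an improper integral at infinity) and (β/1)·∫_0^∞ (e^{ix} - 1)/x^{1+β} dx = -c·(1 - i·tan(βπ/2)) with c = Γ(1-β)·cos(βπ/2). -/
/-!
Regularise the integrand to `(e^{-zx} - 1) / x^{1+β}` with `Re z ≥ 0`; the theorem is the case
`z = -i`. For `Re z > 0`, integrating by parts against `x^{-β}` gives
`-(z/β) ∫₀^∞ x^{-β} e^{-zx} dx = -(z/β) Γ(1-β) z^{β-1}`, the Laplace transform of a power being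
carried over from real to complex `z` by the identity theorem. The bound
`min (|z| x, 2) x^{-1-β}` makes the integral continuous on `Re z ≥ 0` by dominated convergence,
so the formula `-(Γ(1-β)/β) z^β` persists at `z = -i`, where `(-i)^β = cos(βπ/2) - i sin(βπ/2)`.
-/

open Filter MeasureTheory Real Set
open scoped Complex Topology

theorem Complex.norm_exp_sub_one_le_of_re_nonpos {w : ℂ} (hw : w.re ≤ 0) :
    ‖cexp w - 1‖ ≤ ‖w‖ := by
  have hderiv : ∀ t ∈ Icc (0 : ℝ) 1, HasDerivWithinAt (fun t : ℝ => cexp (t * w))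
      (cexp (t * w) * w) (Icc 0 1) t := fun t _ =>
    ((Complex.ofRealCLM.hasDerivAt.mul_const w).cexp).hasDerivWithinAt.congr_deriv (by simp)
  simpa using norm_image_sub_le_of_norm_deriv_le_segment_01' hderiv fun t ht => by
    rw [norm_mul, Complex.norm_exp]
    refine mul_le_of_le_one_left (norm_nonneg w) (Real.exp_le_one_iff.2 ?_)
    simpa using mul_nonpos_of_nonneg_of_nonpos ht.1 hw

lemma Complex.norm_exp_neg_mul_ofReal_sub_one_le {z : ℂ} (hz : 0 ≤ z.re) {x : ℝ} (hx : 0 ≤ x) :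
    ‖cexp (-(z * x)) - 1‖ ≤ min (‖z‖ * x) 2 := by
  have hre : (-(z * x)).re ≤ 0 := by simpa using mul_nonneg hz hx
  refine le_min ?_ ?_
  · simpa [abs_of_nonneg hx] using norm_exp_sub_one_le_of_re_nonpos hre
  · calc ‖cexp (-(z * x)) - 1‖ ≤ ‖cexp (-(z * x))‖ + ‖(1 : ℂ)‖ := norm_sub_le _ _
      _ ≤ 1 + 1 := by
        gcongr
        · rw [Complex.norm_exp, Real.exp_le_one_iff]
          exact hre
        · simp
      _ = 2 := by norm_num

lemma norm_cpow_mul_cexp_neg_mul {t : ℝ} (ht : 0 < t) (a z : ℂ) :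
    ‖(t : ℂ) ^ (a - 1) * cexp (-(z * t))‖ = t ^ (a.re - 1) * Real.exp (-(z.re * t)) := by
  rw [norm_mul, Complex.norm_cpow_eq_rpow_re_of_pos ht, Complex.norm_exp]
  simp

lemma continuousOn_cpow_mul_cexp_neg_mul (a z : ℂ) :
    ContinuousOn (fun t : ℝ => (t : ℂ) ^ (a - 1) * cexp (-(z * t))) (Ioi 0) := fun t ht =>
  ((Complex.continuousAt_ofReal_cpow_const _ _ (Or.inr (ne_of_gt ht))).mul
    (by fun_prop)).continuousWithinAt

lemma integrableOn_cpow_mul_cexp_neg_mul {a z : ℂ} (ha : 0 < a.re) (hz : 0 < z.re) :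
    IntegrableOn (fun t : ℝ => (t : ℂ) ^ (a - 1) * cexp (-(z * t))) (Ioi 0) := by
  have hbound := integrableOn_rpow_mul_exp_neg_mul_rpow (p := 1) (by linarith : -1 < a.re - 1)
    zero_lt_one hz
  refine Integrable.mono' hbound
    ((continuousOn_cpow_mul_cexp_neg_mul a z).aestronglyMeasurable measurableSet_Ioi) ?_
  filter_upwards [ae_restrict_mem measurableSet_Ioi] with t ht
  rw [norm_cpow_mul_cexp_neg_mul ht]
  simp

lemma differentiableOn_integral_cpow_mul_cexp_neg_mul {a : ℂ} (ha : 0 < a.re) :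
    DifferentiableOn ℂ (fun z : ℂ => ∫ t in Ioi (0 : ℝ), (t : ℂ) ^ (a - 1) * cexp (-(z * t)))
      {z | 0 < z.re} := by
  intro z₀ (hz₀ : 0 < z₀.re)
  set ε := z₀.re / 2 with hε_def
  have hε : 0 < ε := half_pos hz₀
  have hball : ∀ z ∈ Metric.ball z₀ ε, ε ≤ z.re := fun z hz => by
    have := (Complex.abs_re_le_norm (z - z₀)).trans_lt (mem_ball_iff_norm.1 hz)
    rw [Complex.sub_re] at this
    linarith [(abs_lt.1 this).1]
  have hbound := integrableOn_rpow_mul_exp_neg_mul_rpow (p := 1) (by linarith : -1 < a.re)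
    zero_lt_one hε
  simp only [rpow_one] at hbound
  refine (hasDerivAt_integral_of_dominated_loc_of_deriv_le (Metric.ball_mem_nhds z₀ hε)
    (F' := fun z t => (t : ℂ) ^ (a - 1) * cexp (-(z * t)) * -t)
    (Eventually.of_forall fun z => (continuousOn_cpow_mul_cexp_neg_mul a z).aestronglyMeasurable
      measurableSet_Ioi) (integrableOn_cpow_mul_cexp_neg_mul ha hz₀)
    (((continuousOn_cpow_mul_cexp_neg_mul a z₀).mul (by fun_prop)).aestronglyMeasurable
      measurableSet_Ioi) ?_ hbound ?_).2.differentiableAt.differentiableWithinAt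
  · filter_upwards [ae_restrict_mem measurableSet_Ioi] with t (ht : 0 < t) z hz
    rw [norm_mul, norm_cpow_mul_cexp_neg_mul ht, norm_neg, Complex.norm_real, norm_of_nonneg ht.le,
      rpow_sub_one ht.ne', mul_right_comm, div_mul_cancel₀ _ ht.ne']
    gcongr
    nlinarith [hball z hz]
  · refine ae_of_all _ fun t z _ => ?_
    have hlin : HasDerivAt (fun w : ℂ => -(w * t)) (-(t : ℂ)) z := by
      simpa using ((hasDerivAt_id' z).mul_const (t : ℂ)).fun_neg
    exact (hlin.cexp.const_mul _).congr_deriv (by ring)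

theorem integral_cpow_mul_cexp_neg_mul_Ioi_of_re_pos {a z : ℂ} (ha : 0 < a.re) (hz : 0 < z.re) :
    ∫ t in Ioi (0 : ℝ), (t : ℂ) ^ (a - 1) * cexp (-(z * t)) = (1 / z) ^ a * Complex.Gamma a := by
  have hH : IsOpen {w : ℂ | 0 < w.re} := isOpen_lt continuous_const Complex.continuous_re
  have hrhs : DifferentiableOn ℂ (fun w : ℂ => (1 / w) ^ a * Complex.Gamma a) {w | 0 < w.re} := by
    intro w (hw : 0 < w.re)
    have hinv : 0 < (1 / w).re := by
      rw [one_div, Complex.inv_re]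
      exact div_pos hw (Complex.normSq_pos.2 fun h => by simp [h] at hw)
    refine (DifferentiableAt.mul_const ?_ _).differentiableWithinAt
    exact (differentiableAt_const _).div (differentiableAt_id) (fun h => by simp [h] at hw)
      |>.cpow_const (Complex.mem_slitPlane_iff.2 (Or.inl hinv))
  have hofReal : Tendsto ((↑) : ℝ → ℂ) (𝓝[≠] 1) (𝓝[≠] 1) :=
    tendsto_nhdsWithin_of_tendsto_nhds_of_eventually_within _
      ((Complex.continuous_ofReal.tendsto' 1 1 Complex.ofReal_one).mono_left nhdsWithin_le_nhds)
      (eventually_nhdsWithin_of_forall fun r hr => by simpa using hr)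
  have hreal : ∃ᶠ w in 𝓝[≠] (1 : ℂ),
      ∫ t in Ioi (0 : ℝ), (t : ℂ) ^ (a - 1) * cexp (-(w * t)) = (1 / w) ^ a * Complex.Gamma a :=
    hofReal.frequently <| Eventually.frequently <|
      (eventually_nhdsWithin_of_eventually_nhds (lt_mem_nhds one_pos)).mono fun r hr =>
        Complex.integral_cpow_mul_exp_neg_mul_Ioi ha hr
  have hlhs := (differentiableOn_integral_cpow_mul_cexp_neg_mul ha).analyticOnNhd hH
  exact hlhs.eqOn_of_preconnected_of_frequently_eq (hrhs.analyticOnNhd hH)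
    (convex_halfSpace_re_gt 0).isPreconnected (by simp) hreal hz

lemma integrableOn_min_mul_mul_rpow {β C D : ℝ} (h0 : 0 < β) (h1 : β < 1) (hC : 0 ≤ C)
    (hD : 0 ≤ D) : IntegrableOn (fun x : ℝ => min (C * x) D * x ^ (-(1 + β))) (Ioi 0) := by
  have hmeas : AEStronglyMeasurable (fun x : ℝ => min (C * x) D * x ^ (-(1 + β)))
      (volume.restrict (Ioi 0)) :=
    ContinuousOn.aestronglyMeasurable (fun x hx => ((continuous_const.mul continuous_id).min
      continuous_const).continuousAt.mul (continuousAt_id.rpow_const (Or.inl (ne_of_gt hx)))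
        |>.continuousWithinAt) measurableSet_Ioi
  have hnorm : ∀ x ∈ Ioi (0 : ℝ),
      ‖min (C * x) D * x ^ (-(1 + β))‖ = min (C * x) D * x ^ (-(1 + β)) :=
    fun x (hx : 0 < x) => norm_of_nonneg (by positivity)
  have hnear : IntegrableOn (fun x : ℝ => C * x ^ (-β)) (Ioc 0 1) := by
    have := intervalIntegral.intervalIntegrable_rpow' (a := 0) (b := 1) (by linarith : -1 < -β)
    exact ((intervalIntegrable_iff_integrableOn_Ioc_of_le zero_le_one).1 this).const_mul C
  have hfar : IntegrableOn (fun x : ℝ => D * x ^ (-(1 + β))) (Ioi 1) :=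
    (integrableOn_Ioi_rpow_of_lt (by linarith) one_pos).const_mul D
  rw [← Ioc_union_Ioi_eq_Ioi zero_le_one]
  refine IntegrableOn.union (hnear.mono' (hmeas.mono_set Ioc_subset_Ioi_self) ?_)
    (hfar.mono' (hmeas.mono_set (Ioi_subset_Ioi zero_le_one)) ?_)
  · filter_upwards [ae_restrict_mem measurableSet_Ioc] with x hx
    have hx0 : 0 < x := hx.1
    calc ‖min (C * x) D * x ^ (-(1 + β))‖ ≤ C * x * x ^ (-(1 + β)) := by
          rw [hnorm x hx0]
          gcongr
          exact min_le_left _ _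
      _ = C * x ^ (-β) := by
          rw [show -(1 + β) = -β - 1 by ring, rpow_sub_one hx0.ne']
          field_simp
  · filter_upwards [ae_restrict_mem measurableSet_Ioi] with x (hx : 1 < x)
    rw [hnorm x (zero_lt_one.trans hx)]
    gcongr
    exact min_le_right _ _

noncomputable def stableIntegrand (β : ℝ) (z : ℂ) (x : ℝ) : ℂ :=
  (cexp (-(z * x)) - 1) / ((x ^ (1 + β) : ℝ) : ℂ)

section StableIntegrand

variable {β : ℝ}

lemma norm_stableIntegrand_le {z : ℂ} (hz : 0 ≤ z.re) {x : ℝ} (hx : 0 < x) :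
    ‖stableIntegrand β z x‖ ≤ min (‖z‖ * x) 2 * x ^ (-(1 + β)) := by
  rw [stableIntegrand, norm_div, Complex.norm_real, norm_of_nonneg (by positivity),
    rpow_neg hx.le, div_eq_mul_inv]
  gcongr
  exact Complex.norm_exp_neg_mul_ofReal_sub_one_le hz hx.le

lemma continuousOn_stableIntegrand (β : ℝ) (z : ℂ) : ContinuousOn (stableIntegrand β z) (Ioi 0) :=
  fun x (hx : 0 < x) => ContinuousAt.continuousWithinAt <| by
    refine ContinuousAt.div (by fun_prop) ?_ (by simpa using (rpow_pos_of_pos hx _).ne')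
    exact Complex.continuous_ofReal.continuousAt.comp (continuousAt_id.rpow_const (Or.inl hx.ne'))

lemma integrableOn_stableIntegrand (h0 : 0 < β) (h1 : β < 1) {z : ℂ} (hz : 0 ≤ z.re) :
    IntegrableOn (stableIntegrand β z) (Ioi 0) := by
  refine (integrableOn_min_mul_mul_rpow h0 h1 (norm_nonneg z) zero_le_two).mono'
    ((continuousOn_stableIntegrand β z).aestronglyMeasurable measurableSet_Ioi) ?_
  filter_upwards [ae_restrict_mem measurableSet_Ioi] with x hx
  exact norm_stableIntegrand_le hz hx

lemma norm_cexp_neg_mul_sub_one_mul_cpow_le {z : ℂ} (hz : 0 ≤ z.re) {x : ℝ} (hx : 0 < x) :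
    ‖(cexp (-(z * x)) - 1) * (x : ℂ) ^ (-(β : ℂ))‖ ≤ min (‖z‖ * x) 2 * x ^ (-β) := by
  rw [norm_mul, Complex.norm_cpow_eq_rpow_re_of_pos hx]
  simpa using mul_le_mul_of_nonneg_right (Complex.norm_exp_neg_mul_ofReal_sub_one_le hz hx.le)
    (rpow_nonneg hx.le (-β))

lemma tendsto_cexp_neg_mul_sub_one_mul_cpow_nhdsGT_zero (h1 : β < 1) {z : ℂ} (hz : 0 ≤ z.re) :
    Tendsto (fun x : ℝ => (cexp (-(z * x)) - 1) * (x : ℂ) ^ (-(β : ℂ))) (𝓝[>] 0) (𝓝 0) := by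
  have hpow : Tendsto (fun x : ℝ => ‖z‖ * x ^ (1 - β)) (𝓝[>] 0) (𝓝 0) := by
    have hcont : ContinuousAt (fun x : ℝ => x ^ (1 - β)) 0 :=
      continuousAt_id.rpow_const (Or.inr (sub_nonneg.2 h1.le))
    simpa [zero_rpow (sub_ne_zero.2 h1.ne')] using
      (hcont.tendsto.mono_left nhdsWithin_le_nhds).const_mul ‖z‖
  refine squeeze_zero_norm' ?_ hpow
  filter_upwards [self_mem_nhdsWithin] with x (hx : 0 < x)
  calc _ ≤ min (‖z‖ * x) 2 * x ^ (-β) := norm_cexp_neg_mul_sub_one_mul_cpow_le hz hx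
    _ ≤ ‖z‖ * x * x ^ (-β) := by gcongr; exact min_le_left _ _
    _ = ‖z‖ * x ^ (1 - β) := by rw [mul_assoc, rpow_sub hx, rpow_one, rpow_neg hx.le]; ring

lemma tendsto_cexp_neg_mul_sub_one_mul_cpow_atTop (h0 : 0 < β) {z : ℂ} (hz : 0 ≤ z.re) :
    Tendsto (fun x : ℝ => (cexp (-(z * x)) - 1) * (x : ℂ) ^ (-(β : ℂ))) atTop (𝓝 0) := by
  refine squeeze_zero_norm' ?_ (by simpa using (tendsto_rpow_neg_atTop h0).const_mul 2)
  filter_upwards [eventually_gt_atTop 0] with x hx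
  calc _ ≤ min (‖z‖ * x) 2 * x ^ (-β) := norm_cexp_neg_mul_sub_one_mul_cpow_le hz hx
    _ ≤ 2 * x ^ (-β) := by gcongr; exact min_le_right _ _

theorem integral_stableIntegrand_eq_mul_integral (h0 : 0 < β) (h1 : β < 1) {z : ℂ}
    (hz : 0 < z.re) :
    ∫ x in Ioi (0 : ℝ), stableIntegrand β z x
      = -(z / β) * ∫ t in Ioi (0 : ℝ), (t : ℂ) ^ ((1 - β : ℂ) - 1) * cexp (-(z * t)) := by
  have hβ : (β : ℂ) ≠ 0 := Complex.ofReal_ne_zero.2 h0.ne'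
  set u : ℝ → ℂ := fun x => cexp (-(z * x)) - 1
  set v : ℝ → ℂ := fun x => (x : ℂ) ^ (-(β : ℂ)) / -(β : ℂ)
  have hu : ∀ x ∈ Ioi (0 : ℝ), HasDerivAt u (-z * cexp (-(z * x))) x := fun x _ => by
    have hlin : HasDerivAt (fun x : ℝ => -(z * x)) (-z) x := by
      simpa using ((Complex.ofRealCLM.hasDerivAt (x := x)).const_mul z).fun_neg
    exact (hlin.cexp.sub_const 1).congr_deriv (mul_comm _ _)
  have hv : ∀ x ∈ Ioi (0 : ℝ), HasDerivAt v ((x : ℂ) ^ (-(β : ℂ) - 1)) x := fun x hx => by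
    have := hasDerivAt_ofReal_cpow_const' (ne_of_gt hx) (r := -(β : ℂ) - 1)
      (by simpa [sub_eq_neg_self] using hβ)
    simpa using this
  have huv' : EqOn (stableIntegrand β z) (fun x => u x * (x : ℂ) ^ (-(β : ℂ) - 1)) (Ioi 0) :=
    fun x (hx : 0 < x) => by
      rw [stableIntegrand, Complex.ofReal_cpow hx.le, div_eq_mul_inv, ← Complex.cpow_neg]
      push_cast
      rw [show -(1 + (β : ℂ)) = -β - 1 by ring]
  have hu'v : EqOn (fun t : ℝ => (z / β) * ((t : ℂ) ^ ((1 - β : ℂ) - 1) * cexp (-(z * t))))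
      (fun x => -z * cexp (-(z * x)) * v x) (Ioi 0) := fun x _ => by
    simp only [v]
    rw [sub_sub_cancel_left]
    ring
  have hbdry : ∀ l, Tendsto (fun x : ℝ => (cexp (-(z * x)) - 1) * (x : ℂ) ^ (-(β : ℂ))) l (𝓝 0) →
      Tendsto (u * v) l (𝓝 0) := fun l h => by
    have := (h.div_const (-(β : ℂ))).congr fun x => mul_div_assoc _ _ _
    rwa [zero_div] at this
  rw [setIntegral_congr_fun measurableSet_Ioi huv',
    integral_Ioi_mul_deriv_eq_deriv_mul hu hv
      ((integrableOn_stableIntegrand h0 h1 hz.le).congr_fun huv' measurableSet_Ioi)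
      (IntegrableOn.congr_fun ((integrableOn_cpow_mul_cexp_neg_mul (by simpa using h1) hz).const_mul
        (z / β)) hu'v measurableSet_Ioi)
      (hbdry _ (tendsto_cexp_neg_mul_sub_one_mul_cpow_nhdsGT_zero h1 hz.le))
      (hbdry _ (tendsto_cexp_neg_mul_sub_one_mul_cpow_atTop h0 hz.le)),
    ← setIntegral_congr_fun measurableSet_Ioi hu'v, integral_const_mul]
  ring

theorem integral_stableIntegrand_of_re_pos (h0 : 0 < β) (h1 : β < 1) {z : ℂ} (hz : 0 < z.re) :
    ∫ x in Ioi (0 : ℝ), stableIntegrand β z x = -((Real.Gamma (1 - β) : ℂ) / β) * z ^ (β : ℂ) := by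
  have hz0 : z ≠ 0 := fun h => by simp [h] at hz
  have harg : z.arg ≠ π := fun h => by
    rw [Complex.arg_eq_pi_iff] at h
    linarith [h.1]
  rw [integral_stableIntegrand_eq_mul_integral h0 h1 hz,
    integral_cpow_mul_cexp_neg_mul_Ioi_of_re_pos (by simpa using h1) hz,
    show (1 - β : ℂ) = ((1 - β : ℝ) : ℂ) by push_cast; rfl, Complex.Gamma_ofReal, one_div,
    Complex.inv_cpow _ _ harg]
  have hpow : z ^ (β : ℂ) = z / z ^ ((1 - β : ℝ) : ℂ) := by
    rw [show (β : ℂ) = 1 - ((1 - β : ℝ) : ℂ) by push_cast; ring, Complex.cpow_sub _ _ hz0,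
      Complex.cpow_one]
  rw [hpow]
  ring

theorem continuousOn_integral_stableIntegrand (h0 : 0 < β) (h1 : β < 1) :
    ContinuousOn (fun z : ℂ => ∫ x in Ioi (0 : ℝ), stableIntegrand β z x) {z | 0 ≤ z.re} := by
  intro z₀ _
  have hnear : ∀ᶠ z in 𝓝[{z | 0 ≤ z.re}] z₀, 0 ≤ z.re ∧ ‖z‖ ≤ ‖z₀‖ + 1 :=
    eventually_mem_nhdsWithin.and <| eventually_nhdsWithin_of_eventually_nhds <|
      (continuous_norm.continuousAt.eventually (gt_mem_nhds (lt_add_one ‖z₀‖))).mono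
        fun _ h => h.le
  refine continuousWithinAt_of_dominated
    (Eventually.of_forall fun z => (continuousOn_stableIntegrand β z).aestronglyMeasurable
      measurableSet_Ioi)
    (hnear.mono fun z hz => ?_)
    (integrableOn_min_mul_mul_rpow (C := ‖z₀‖ + 1) h0 h1 (by positivity) zero_le_two)
    (ae_of_all _ fun x => ?_)
  · filter_upwards [ae_restrict_mem measurableSet_Ioi] with x (hx : 0 < x)
    refine (norm_stableIntegrand_le hz.1 hx).trans ?_
    gcongr
    exact hz.2
  · exact Continuous.continuousWithinAt (by unfold stableIntegrand; fun_prop)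

theorem integral_stableIntegrand (h0 : 0 < β) (h1 : β < 1) {z : ℂ} (hz : 0 ≤ z.re) :
    ∫ x in Ioi (0 : ℝ), stableIntegrand β z x = -((Real.Gamma (1 - β) : ℂ) / β) * z ^ (β : ℂ) :=
  EqOn.of_subset_closure (s := {w : ℂ | 0 < w.re})
    (fun _ hw => integral_stableIntegrand_of_re_pos h0 h1 hw)
    (continuousOn_integral_stableIntegrand h0 h1)
    (fun w hw => ((Complex.continuousAt_cpow_const_of_re_pos (Or.inl hw)
      (by simpa using h0)).const_mul _).continuousWithinAt)
    (fun w (hw : 0 < w.re) => show 0 ≤ w.re from hw.le) (by simp) hz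

end StableIntegrand

lemma Complex.neg_I_cpow_ofReal (β : ℝ) :
    (-I) ^ (β : ℂ) = Real.cos (β * π / 2) - Real.sin (β * π / 2) * I := by
  rw [Complex.cpow_def_of_ne_zero (neg_ne_zero.2 Complex.I_ne_zero), Complex.log_neg_I,
    show -(π / 2 : ℂ) * I * β = ((-(β * π / 2) : ℝ) : ℂ) * I by push_cast; ring,
    Complex.exp_mul_I, ← Complex.ofReal_cos, ← Complex.ofReal_sin, Real.cos_neg, Real.sin_neg]
  push_cast
  ring

/-- for `0 < β < 1`, the improper integral `∫_0^∞ (e^{ix} - 1)/x^{1+β} dx`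
converges (as an improper integral at infinity) and
`β ∫_0^∞ (e^{ix} - 1)/x^{1+β} dx = -c (1 - i tan(βπ/2))` with `c = Γ(1-β) cos(βπ/2)`. -/
theorem stable_integral_beta_lt_one (β : ℝ) (h0 : 0 < β) (h1 : β < 1) :
    Tendsto (fun T : ℝ => (β : ℂ) * ∫ x in (0:ℝ)..T,
        (Complex.exp ((x : ℂ) * Complex.I) - 1) / ((x ^ (1 + β) : ℝ) : ℂ))
      atTop
      (nhds (-((Real.Gamma (1 - β) * Real.cos (β * Real.pi / 2) : ℝ) : ℂ)
        * (1 - Complex.I * ((Real.tan (β * Real.pi / 2) : ℝ) : ℂ)))) := by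
  have hβ : (β : ℂ) ≠ 0 := Complex.ofReal_ne_zero.2 h0.ne'
  have hcos : (Real.cos (β * π / 2) : ℂ) ≠ 0 := Complex.ofReal_ne_zero.2
    (Real.cos_pos_of_mem_Ioo ⟨by nlinarith [pi_pos], by nlinarith [pi_pos]⟩).ne'
  have hlim := (intervalIntegral_tendsto_integral_Ioi 0
    (integrableOn_stableIntegrand h0 h1 (z := -Complex.I) (by simp)) tendsto_id).const_mul (β : ℂ)
  rw [integral_stableIntegrand h0 h1 (by simp), Complex.neg_I_cpow_ofReal] at hlim
  convert hlim using 2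
  · simp [stableIntegrand, mul_comm]
  · rw [Real.tan_eq_sin_div_cos, Complex.ofReal_mul, Complex.ofReal_div]
    field_simp
end

section
/- Let X_1, ..., X_n be independent nonnegative random variables with distribution functions F_k satisfying conditions (I) and (II) with indices α_k → α ∈ (0,1), for a truncation sequence b_n → ∞. If h_n := ∑_{k=1}^n (1 - F_k(b_n)) → ∞, then the Lyapunov ratio ∑_{k=1}^n E|X_k(b_n) - μ_k(b_n)|³ / (∑_{k=1}^n Var(X_k(b_n)))^{3/2} = O(h_n^{-1/2}) → 0 as n → ∞. -/
open Filter MeasureTheory Real ProbabilityTheory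

/-!
Truncated at `b_n`, each `X_k` takes values in `[0, b_n]`, so its centred third absolute moment
is at most `b_n` times its variance. Condition (II) for `r = 1, 2` bounds the mean by a multiple of
`b_n p` and the second moment from below by a multiple of `b_n² p`, where `p = 1 - F_k(b_n)`; by (I)
`p → 0`, so the squared mean is negligible and the variance is at least a constant times `b_n² p`.
The constant is uniform in `k` because the indices `α_k` stay in a compact subinterval of `(0, 1)`.
Summing over `k`, the Lyapunov ratio is at most `b_n / √(∑ Var) ≤ C / √h_n`.
-/

lemma exists_forall_mem_Icc_of_tendsto {u : ℕ → ℝ} {l a b : ℝ} (hu : ∀ k, u k ∈ Set.Ioo a b)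
    (hul : Tendsto u atTop (nhds l)) (hl : l ∈ Set.Ioo a b) :
    ∃ c d, a < c ∧ d < b ∧ ∀ k, u k ∈ Set.Icc c d := by
  set K := insert l (Set.range u)
  have hK : IsCompact K := hul.isCompact_insert_range
  have hKne : K.Nonempty := Set.insert_nonempty l _
  have hKab : K ⊆ Set.Ioo a b := Set.insert_subset hl (Set.range_subset_iff.2 hu)
  refine ⟨sInf K, sSup K, (hKab (hK.sInf_mem hKne)).1, (hKab (hK.sSup_mem hKne)).2, fun k => ?_⟩
  have hk : u k ∈ K := Set.mem_insert_of_mem l ⟨k, rfl⟩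
  exact ⟨csInf_le hK.bddBelow hk, le_csSup hK.bddAbove hk⟩

lemma div_one_sub_le_div_one_sub {x y : ℝ} (hxy : x ≤ y) (hy : y < 1) :
    x / (1 - x) ≤ y / (1 - y) := by
  rw [div_le_div_iff₀ (by linarith) (by linarith)]
  nlinarith

lemma ite_le_mem_Icc {x c : ℝ} (hx : 0 ≤ x) (hc : 0 ≤ c) :
    (if x ≤ c then x else 0) ∈ Set.Icc 0 c := by
  split_ifs with h
  exacts [⟨hx, h⟩, ⟨le_rfl, hc⟩]

lemma memLp_ite_le {Ω : Type*} [MeasurableSpace Ω] {μ : Measure Ω} [IsFiniteMeasure μ]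
    {X : Ω → ℝ} {c : ℝ} (hX : Measurable X) (hX0 : ∀ ω, 0 ≤ X ω) (hc : 0 ≤ c) (p : ENNReal) :
    MemLp (fun ω => if X ω ≤ c then X ω else 0) p μ := by
  refine MemLp.of_bound (Measurable.ite (measurableSet_le hX measurable_const) hX
    measurable_const).aestronglyMeasurable c (ae_of_all _ fun ω => ?_)
  obtain ⟨h0, hXc⟩ := ite_le_mem_Icc (hX0 ω) hc
  rwa [norm_eq_abs, abs_of_nonneg h0]

section CenteredMoments

variable {Ω : Type*} [MeasurableSpace Ω] {μ : Measure Ω} [IsProbabilityMeasure μ] {f : Ω → ℝ}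

lemma integral_sub_integral_sq_eq (hf : MemLp f 2 μ) :
    ∫ ω, (f ω - ∫ x, f x ∂μ) ^ 2 ∂μ = ∫ ω, f ω ^ 2 ∂μ - (∫ ω, f ω ∂μ) ^ 2 := by
  rw [← variance_eq_integral hf.aemeasurable, variance_eq_sub hf]
  rfl

lemma integral_abs_sub_integral_pow_three_le {c : ℝ} (hf : MemLp f 2 μ)
    (hfc : ∀ ω, f ω ∈ Set.Icc 0 c) :
    ∫ ω, |f ω - ∫ x, f x ∂μ| ^ 3 ∂μ ≤ c * ∫ ω, (f ω - ∫ x, f x ∂μ) ^ 2 ∂μ := by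
  set m := ∫ x, f x ∂μ
  have hm : m ∈ Set.Icc 0 c :=
    ⟨integral_nonneg fun ω => (hfc ω).1, by
      simpa using integral_mono (hf.integrable one_le_two) (integrable_const c) fun ω => (hfc ω).2⟩
  have hdev : ∀ ω, |f ω - m| ≤ c := fun ω =>
    abs_sub_le_of_nonneg_of_le (hfc ω).1 (hfc ω).2 hm.1 hm.2
  rw [← integral_const_mul]
  refine integral_mono_of_nonneg (ae_of_all _ fun ω => by positivity)
    ((hf.sub (memLp_const m)).integrable_sq.const_mul c) (ae_of_all _ fun ω => ?_)
  calc |f ω - m| ^ 3 = |f ω - m| * (f ω - m) ^ 2 := by rw [← sq_abs]; ring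
    _ ≤ c * (f ω - m) ^ 2 := mul_le_mul_of_nonneg_right (hdev ω) (sq_nonneg _)

lemma le_integral_sub_integral_sq {A B c p : ℝ} (hf : MemLp f 2 μ) (hf0 : ∀ ω, 0 ≤ f ω)
    (hp : 0 ≤ p) (hsq : A * c ^ 2 * p ≤ ∫ ω, f ω ^ 2 ∂μ) (hmean : ∫ ω, f ω ∂μ ≤ B * c * p)
    (hsmall : B ^ 2 * p ≤ A / 2) :
    A / 2 * c ^ 2 * p ≤ ∫ ω, (f ω - ∫ x, f x ∂μ) ^ 2 ∂μ := by
  have hm0 : 0 ≤ ∫ ω, f ω ∂μ := integral_nonneg hf0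
  have : (∫ ω, f ω ∂μ) ^ 2 ≤ A / 2 * c ^ 2 * p :=
    calc (∫ ω, f ω ∂μ) ^ 2 ≤ (B * c * p) ^ 2 := pow_le_pow_left₀ hm0 hmean 2
      _ = B ^ 2 * p * (c ^ 2 * p) := by ring
      _ ≤ A / 2 * (c ^ 2 * p) := mul_le_mul_of_nonneg_right hsmall (by positivity)
      _ = A / 2 * c ^ 2 * p := by ring
  rw [integral_sub_integral_sq_eq hf]
  linarith

lemma le_integral_sub_integral_sq_of_moment_asymptotics {a b c d p : ℝ} (hf : MemLp f 2 μ)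
    (hf0 : ∀ ω, 0 ≤ f ω) (hc : 0 < c) (ha : a ∈ Set.Icc c d) (hd : d < 1) (hb : 0 ≤ b)
    (hp : 0 ≤ p)
    (h1 : |∫ ω, f ω ∂μ - a / (1 - a) * b * p| ≤ 1 / 2 * (a / (1 - a) * b * p))
    (h2 : |∫ ω, f ω ^ 2 ∂μ - a / (2 - a) * b ^ 2 * p| ≤ 1 / 2 * (a / (2 - a) * b ^ 2 * p))
    (hsmall : p < c / 8 / (3 / 2 * (d / (1 - d))) ^ 2) :
    c / 8 * b ^ 2 * p ≤ ∫ ω, (f ω - ∫ x, f x ∂μ) ^ 2 ∂μ := by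
  have hB : 0 < 3 / 2 * (d / (1 - d)) :=
    mul_pos (by norm_num) (div_pos (hc.trans_le (ha.1.trans ha.2)) (sub_pos.2 hd))
  have hsq : c / 2 ≤ a / (2 - a) := by
    rw [le_div_iff₀ (by linarith [ha.2])]
    nlinarith [ha.1, ha.2]
  have hmean := div_one_sub_le_div_one_sub ha.2 hd
  rw [lt_div_iff₀ (by positivity)] at hsmall
  refine (by ring : c / 4 / 2 = c / 8) ▸ le_integral_sub_integral_sq (B := 3 / 2 * (d / (1 - d))) hf hf0 hp
    ?_ ?_ (by linarith)
  · nlinarith [(abs_le.1 h2).1, mul_le_mul_of_nonneg_right hsq (mul_nonneg (sq_nonneg b) hp)]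
  · nlinarith [(abs_le.1 h1).2, mul_le_mul_of_nonneg_right hmean (mul_nonneg hb hp)]

end CenteredMoments

lemma div_rpow_three_halves_le_div_sqrt {N D b c h : ℝ} (hb : 0 < b) (hc : 0 < c) (hh : 0 < h)
    (hN : N ≤ b * D) (hD : c * b ^ 2 * h ≤ D) :
    N / D ^ ((3 : ℝ) / 2) ≤ (√c)⁻¹ / √h := by
  have hD0 : 0 < D := lt_of_lt_of_le (by positivity) hD
  have hD32 : D ^ ((3 : ℝ) / 2) = D * √D := by
    rw [show (3 : ℝ) / 2 = 1 + 1 / 2 by norm_num, rpow_add hD0, rpow_one, sqrt_eq_rpow]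
  calc N / D ^ ((3 : ℝ) / 2) ≤ b * D / (D * √D) := by rw [hD32]; gcongr
    _ = b / √D := by field_simp
    _ ≤ b / √(c * b ^ 2 * h) := by gcongr
    _ = (√c)⁻¹ / √h := by
      rw [sqrt_mul (by positivity), sqrt_mul hc.le, sqrt_sq hb.le]
      field_simp

lemma sum_div_sum_rpow_three_halves_le {ι : Type*} {s : Finset ι} {N D p : ι → ℝ} {b c : ℝ}
    (hb : 0 < b) (hc : 0 < c) (hp : 0 < ∑ i ∈ s, p i) (hN : ∀ i ∈ s, N i ≤ b * D i)
    (hD : ∀ i ∈ s, c * b ^ 2 * p i ≤ D i) :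
    (∑ i ∈ s, N i) / (∑ i ∈ s, D i) ^ ((3 : ℝ) / 2) ≤ (√c)⁻¹ / √(∑ i ∈ s, p i) := by
  refine div_rpow_three_halves_le_div_sqrt hb hc hp ?_ ?_
  · rw [Finset.mul_sum]; exact Finset.sum_le_sum hN
  · rw [Finset.mul_sum]; exact Finset.sum_le_sum hD

theorem lyapunov_ratio_tendsto_zero_general
    {Ω : Type*} [MeasurableSpace Ω] (μ : Measure Ω) [IsProbabilityMeasure μ]
    (X : ℕ → Ω → ℝ) (hX : ∀ k, Measurable (X k)) (hXnonneg : ∀ k ω, 0 ≤ X k ω)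
    (αs : ℕ → ℝ) (α : ℝ) (hαs : ∀ k, 0 < αs k ∧ αs k < 1)
    (hα : 0 < α ∧ α < 1) (hαlim : Tendsto αs atTop (nhds α))
    (b : ℕ → ℝ) (hbpos : ∀ n, 0 < b n)
    (F : ℕ → ℝ → ℝ) (hF : ∀ k x, F k x = (μ {ω | X k ω ≤ x}).toReal)
    -- condition (I): max_{k<n} (1 - F_k(b_n)) → 0
    (hI : ∀ ε > 0, ∃ N, ∀ n ≥ N, ∀ k < n, 1 - F k (b n) < ε)
    -- condition (II): E[X_k(b_n)^r] = (1+o(1)) (α_k/(r-α_k)) b_n^r (1-F_k(b_n)) → ∞,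
    -- uniformly in k ≤ n
    (hII : ∀ r : ℝ, 1 ≤ r →
      (∀ ε > 0, ∃ N, ∀ n ≥ N, ∀ k < n,
        |(∫ ω, (if X k ω ≤ b n then X k ω else 0) ^ r ∂μ)
            - (αs k / (r - αs k)) * b n ^ r * (1 - F k (b n))|
          ≤ ε * ((αs k / (r - αs k)) * b n ^ r * (1 - F k (b n))))
      ∧ (∀ M : ℝ, ∃ N, ∀ n ≥ N, ∀ k < n,
          M ≤ ∫ ω, (if X k ω ≤ b n then X k ω else 0) ^ r ∂μ))
    (hh : Tendsto (fun n => ∑ k ∈ Finset.range n, (1 - F k (b n))) atTop atTop) :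
    let T : ℕ → ℕ → Ω → ℝ := fun n k ω => if X k ω ≤ b n then X k ω else 0
    let m : ℕ → ℕ → ℝ := fun n k => ∫ ω, T n k ω ∂μ
    let ratio : ℕ → ℝ := fun n =>
      (∑ k ∈ Finset.range n, ∫ ω, |T n k ω - m n k| ^ 3 ∂μ)
        / (∑ k ∈ Finset.range n, ∫ ω, (T n k ω - m n k) ^ 2 ∂μ) ^ ((3:ℝ)/2)
    (∃ C > 0, ∀ᶠ n in atTop,
      ratio n ≤ C / Real.sqrt (∑ k ∈ Finset.range n, (1 - F k (b n))))
    ∧ Tendsto ratio atTop (nhds 0) := by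
  intro T m ratio
  obtain ⟨c, d, hc, hd, hαcd⟩ := exists_forall_mem_Icc_of_tendsto hαs hαlim hα
  have hT n k ω : T n k ω ∈ Set.Icc 0 (b n) := ite_le_mem_Icc (hXnonneg k ω) (hbpos n).le
  have hTLp n k : MemLp (T n k) 2 μ := memLp_ite_le (hX k) (hXnonneg k) (hbpos n).le 2
  have htail k x : 0 ≤ 1 - F k x := by rw [hF]; exact sub_nonneg.2 measureReal_le_one
  have hε : 0 < c / 8 / (3 / 2 * (d / (1 - d))) ^ 2 := by
    have hd0 : 0 < d := hc.trans_le ((hαcd 0).1.trans (hαcd 0).2)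
    exact div_pos (by positivity) (pow_pos (mul_pos (by norm_num) (div_pos hd0 (by linarith))) 2)
  have hvar : ∀ᶠ n in atTop, ∀ k < n,
      c / 8 * b n ^ 2 * (1 - F k (b n)) ≤ ∫ ω, (T n k ω - m n k) ^ 2 ∂μ := by
    filter_upwards [eventually_atTop.2 (hI _ hε),
      eventually_atTop.2 ((hII 1 le_rfl).1 (1 / 2) (by norm_num)),
      eventually_atTop.2 ((hII 2 one_le_two).1 (1 / 2) (by norm_num))] with n hIn h1 h2 k hk
    have h1 := h1 k hk
    have h2 := h2 k hk
    simp only [rpow_one, rpow_two] at h1 h2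
    exact le_integral_sub_integral_sq_of_moment_asymptotics (hTLp n k) (fun ω => (hT n k ω).1)
      hc (hαcd k) hd (hbpos n).le (htail k (b n)) h1 h2 (hIn k hk)
  have hbound : ∀ᶠ n in atTop,
      ratio n ≤ (√(c / 8))⁻¹ / √(∑ k ∈ Finset.range n, (1 - F k (b n))) := by
    filter_upwards [hvar, hh.eventually_ge_atTop 1] with n hvn hhn
    exact sum_div_sum_rpow_three_halves_le (hbpos n) (by positivity) (by linarith)
      (fun k _ => integral_abs_sub_integral_pow_three_le (hTLp n k) (hT n k))
      (fun k hk => hvn k (Finset.mem_range.1 hk))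
  have hratio0 n : 0 ≤ ratio n := by positivity
  exact ⟨⟨_, by positivity, hbound⟩, squeeze_zero' (.of_forall hratio0) hbound
    ((tendsto_sqrt_atTop.comp hh).const_div_atTop _)⟩

/-- under conditions (I) and (II), if `h_n = ∑_{k<n} (1-F_k(b_n)) → ∞`,
the Lyapunov ratio `∑ E|X_k(b_n)-μ_k(b_n)|³ / (∑ Var X_k(b_n))^{3/2}` is
`O(h_n^{-1/2})` and tends to `0`. -/
theorem lyapunov_ratio_tendsto_zero
    {Ω : Type*} [MeasurableSpace Ω] (μ : Measure Ω) [IsProbabilityMeasure μ]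
    (X : ℕ → Ω → ℝ) (hX : ∀ k, Measurable (X k)) (hXnonneg : ∀ k ω, 0 ≤ X k ω)
    (αs : ℕ → ℝ) (α : ℝ) (hαs : ∀ k, 0 < αs k ∧ αs k < 1)
    (hα : 0 < α ∧ α < 1) (hαlim : Tendsto αs atTop (nhds α))
    (b : ℕ → ℝ) (hbpos : ∀ n, 0 < b n) (hb : Tendsto b atTop atTop)
    (F : ℕ → ℝ → ℝ) (hF : ∀ k x, F k x = (μ {ω | X k ω ≤ x}).toReal)
    -- condition (I): max_{k<n} (1 - F_k(b_n)) → 0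
    (hI : ∀ ε > 0, ∃ N, ∀ n ≥ N, ∀ k < n, 1 - F k (b n) < ε)
    -- condition (II): E[X_k(b_n)^r] = (1+o(1)) (α_k/(r-α_k)) b_n^r (1-F_k(b_n)) → ∞,
    -- uniformly in k ≤ n
    (hII : ∀ r : ℝ, 1 ≤ r →
      (∀ ε > 0, ∃ N, ∀ n ≥ N, ∀ k < n,
        |(∫ ω, (if X k ω ≤ b n then X k ω else 0) ^ r ∂μ)
            - (αs k / (r - αs k)) * b n ^ r * (1 - F k (b n))|
          ≤ ε * ((αs k / (r - αs k)) * b n ^ r * (1 - F k (b n))))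
      ∧ (∀ M : ℝ, ∃ N, ∀ n ≥ N, ∀ k < n,
          M ≤ ∫ ω, (if X k ω ≤ b n then X k ω else 0) ^ r ∂μ))
    (hh : Tendsto (fun n => ∑ k ∈ Finset.range n, (1 - F k (b n))) atTop atTop) :
    let T : ℕ → ℕ → Ω → ℝ := fun n k ω => if X k ω ≤ b n then X k ω else 0
    let m : ℕ → ℕ → ℝ := fun n k => ∫ ω, T n k ω ∂μ
    let ratio : ℕ → ℝ := fun n =>
      (∑ k ∈ Finset.range n, ∫ ω, |T n k ω - m n k| ^ 3 ∂μ)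
        / (∑ k ∈ Finset.range n, ∫ ω, (T n k ω - m n k) ^ 2 ∂μ) ^ ((3:ℝ)/2)
    (∃ C > 0, ∀ᶠ n in atTop,
      ratio n ≤ C / Real.sqrt (∑ k ∈ Finset.range n, (1 - F k (b n))))
    ∧ Tendsto ratio atTop (nhds 0) :=
  lyapunov_ratio_tendsto_zero_general μ X hX hXnonneg αs α hαs hα hαlim b hbpos F hF hI hII hh
end
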